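/- If D is a linear, consistent finite difference operator (D(αf₁+βf₂)=αD(f₁)+βD(f₂) and D of a constant grid function is zero), H is a constant grid function, and hu = 0, then D((hu)²/(H−b) + gH²/2 − gHb) + gH·D(b) = 0 for any grid function b with H − b > 0. -/
import Mathlib

/-- If `D` is a linear consistent finite difference operator on grid functions,
`H` constant, `hu = 0`, then `D((hu)²/(H−b) + gH²/2 − gHb) + gH·D(b) = 0`. -/
theorem stmt_1 (D : (ℤ → ℝ) → (ℤ → ℝ))
    (hlin : ∀ (α β : ℝ) (f₁ f₂ : ℤ → ℝ), D (fun j => α * f₁ j + β * f₂ j)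
      = fun j => α * D f₁ j + β * D f₂ j)
    (hconst : ∀ c : ℝ, D (fun _ => c) = fun _ => 0)
    (g H : ℝ) (hg : 0 < g) (b : ℤ → ℝ) (hb : ∀ j, b j < H)
    (hu : ℤ → ℝ) (hhu : ∀ j, hu j = 0) (j : ℤ) :
    D (fun i => (hu i) ^ 2 / (H - b i) + g * H ^ 2 / 2 - g * H * b i) j
      + g * H * D b j = 0 := by
  have h1 : (fun i => (hu i) ^ 2 / (H - b i) + g * H ^ 2 / 2 - g * H * b i)
      = fun i => (g * H ^ 2 / 2) * (fun _ : ℤ => (1:ℝ)) i + (-(g * H)) * b i := by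
    funext i
    simp [hhu i]
    ring
  rw [h1, hlin, hconst]
  simp
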